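/- Let 2 ≤ r < s be integers with 2r > s and s odd. Then there is no (r,s;4)-balanced biregular graph of order 2s, and the minimum order n_bb(r,s;4) equals 2(s+1). -/

import Mathlib

open SimpleGraph Set

/-- The degree of a vertex, via the natural cardinality of its neighbor set. -/
noncomputable def deg {V : Type*} (G : SimpleGraph V) (v : V) : ℕ :=
  (G.neighborSet v).ncard

/-- Number of edges both of whose endpoints have degree `d`. -/
noncomputable def edgeCountDeg {V : Type*} (G : SimpleGraph V) (d : ℕ) : ℕ :=
  {e ∈ G.edgeSet | ∀ v ∈ e, deg G v = d}.ncard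

/-- An `(r,s;g)`-balanced biregular graph: girth `g`, degree set exactly `{r, s}`,
and equally many vertices of degree `r` as of degree `s`. -/
def IsBabi {V : Type*} (r s g : ℕ) (G : SimpleGraph V) : Prop :=
  G.girth = g ∧ (∀ v, deg G v = r ∨ deg G v = s) ∧
  (∃ v, deg G v = r) ∧ (∃ v, deg G v = s) ∧
  {v | deg G v = r}.ncard = {v | deg G v = s}.ncard


/-!
Let `S` be the set of vertices of degree `s`. Since every vertex has degree `r < s` or `s` and
there are as many of the one kind as of the other, the edges leaving `S` cannot all end outside
`S`: two vertices `u, v` of degree `s` are adjacent. In a triangle-free graph their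
neighbourhoods are disjoint, so the order `n = 2 #S` is at least `2s`. If `n = 2s`, the two
neighbourhoods split the vertices into two independent sets `A, B` of size `s`, so the degree
sums over `A` and over `B` agree; as `r ≠ s`, this forces `A` and `B` to contain equally many
vertices of degree `s`, and `s = #S` is even. For odd `s = 2m - 1` the order `2(s + 1)` is
attained by the bipartite graph `babiGraph m (r - m)`.
-/

open Finset

namespace SimpleGraph

variable {V : Type*} {G : SimpleGraph V}

theorem not_adj_of_three_lt_girth (h : 3 < G.girth) {x y z : V} (hxy : G.Adj x y)
    (hyz : G.Adj y z) : ¬ G.Adj x z := by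
  intro hxz
  have hcycle : (Walk.cons hxy (Walk.cons hyz (Walk.cons hxz.symm Walk.nil))).IsCycle := by
    simp [Walk.cons_isCycle_iff, hxy.ne, hyz.ne, hxz.ne, hxy.ne.symm, hxz.ne.symm]
  have := girth_le_length hcycle
  simp only [Walk.length_cons, Walk.length_nil] at this
  omega

theorem IsBipartite.even_length (hG : G.IsBipartite) {u : V} (w : G.Walk u u) :
    Even w.length := by
  by_contra hodd
  have h3 := w.three_le_chromaticNumber_of_odd_loop (Nat.not_even_iff_odd.mp hodd)
  have h2 := chromaticNumber_le_two_iff_isBipartite.mpr hG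
  exact absurd (h3.trans h2) (by decide)

theorem IsBipartite.girth_eq_four (hG : G.IsBipartite) {u : V} {w : G.Walk u u}
    (hw : w.IsCycle) (hlen : w.length = 4) : G.girth = 4 := by
  refine le_antisymm (hlen ▸ girth_le_length hw) ?_
  obtain ⟨a, c, hc, hgirth⟩ := exists_girth_eq_length.mpr fun hacyc => hacyc w hw
  obtain ⟨k, hk⟩ := hG.even_length c
  have := hc.three_le_length
  omega

theorem Iso.deg_apply {W : Type*} {G' : SimpleGraph W} (f : G ≃g G') (v : V) :
    deg G' (f v) = deg G v := by
  rw [deg, deg, ← f.image_neighborSet, Set.ncard_image_of_injective _ f.injective]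

variable [Fintype V] [DecidableRel G.Adj]

theorem sum_degree_le_of_neighborFinset_subset {s t : Finset V}
    (h : ∀ v ∈ s, G.neighborFinset v ⊆ t) : ∑ v ∈ s, G.degree v ≤ ∑ w ∈ t, G.degree w := by
  calc ∑ v ∈ s, G.degree v = ∑ v ∈ s, #(t.bipartiteAbove G.Adj v) := by
        refine sum_congr rfl fun v hv => ?_
        rw [← card_neighborFinset_eq_degree]
        congr 1
        ext w
        rw [bipartiteAbove, mem_filter, mem_neighborFinset]
        exact ⟨fun hvw => ⟨h v hv ((mem_neighborFinset _ _ _).mpr hvw), hvw⟩, And.right⟩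
    _ = ∑ w ∈ t, #(s.bipartiteBelow G.Adj w) :=
        sum_card_bipartiteAbove_eq_sum_card_bipartiteBelow _
    _ ≤ ∑ w ∈ t, G.degree w := sum_le_sum fun w _ => by
        rw [← card_neighborFinset_eq_degree]
        refine card_le_card fun v hv => ?_
        rw [bipartiteBelow, mem_filter] at hv
        exact (mem_neighborFinset _ _ _).mpr hv.2.symm

theorem disjoint_neighborFinset_of_three_lt_girth (hG : 3 < G.girth) {u v : V}
    (huv : G.Adj u v) : Disjoint (G.neighborFinset u) (G.neighborFinset v) := by
  rw [Finset.disjoint_left]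
  intro w hwu hwv
  rw [mem_neighborFinset] at hwu hwv
  exact not_adj_of_three_lt_girth hG huv hwv hwu

theorem neighborFinset_subset_of_union_eq_univ [DecidableEq V] (hG : 3 < G.girth) {u v : V}
    (hcover : G.neighborFinset u ∪ G.neighborFinset v = Finset.univ) {x : V}
    (hx : x ∈ G.neighborFinset u) : G.neighborFinset x ⊆ G.neighborFinset v := by
  intro y hy
  rw [mem_neighborFinset] at hx hy
  have hyu : ¬ G.Adj u y := not_adj_of_three_lt_girth hG hx hy
  simpa [hyu] using hcover.ge (mem_univ y)

end SimpleGraph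

section IsBabi

variable {V : Type*} {G : SimpleGraph V} {r s g : ℕ}

theorem deg_eq_degree [Fintype V] [DecidableRel G.Adj] (v : V) : deg G v = G.degree v := by
  rw [deg, ← card_neighborSet_eq_degree, Set.ncard_eq_toFinset_card', Set.toFinset_card]

theorem sum_deg_eq_of_deg_mem (hdeg : ∀ v, deg G v = r ∨ deg G v = s) (A : Finset V) :
    ∑ v ∈ A, deg G v = s * #{v ∈ A | deg G v = s} + r * #{v ∈ A | deg G v ≠ s} := by
  rw [← sum_filter_add_sum_filter_not A (deg G · = s), mul_comm s, mul_comm r]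
  congr 1
  · exact sum_const_nat fun v hv => (mem_filter.mp hv).2
  · exact sum_const_nat fun v hv => (hdeg v).resolve_right (mem_filter.mp hv).2

theorem card_filter_deg_eq_of_neighborFinset_subset [Fintype V] [DecidableRel G.Adj]
    (hrs : r < s) (hdeg : ∀ v, deg G v = r ∨ deg G v = s) {A B : Finset V}
    (hAB : ∀ x ∈ A, G.neighborFinset x ⊆ B) (hBA : ∀ y ∈ B, G.neighborFinset y ⊆ A)
    (hcard : #A = #B) : #{v ∈ A | deg G v = s} = #{v ∈ B | deg G v = s} := by
  have hsum : ∑ v ∈ A, deg G v = ∑ v ∈ B, deg G v := by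
    simp only [deg_eq_degree]
    exact le_antisymm (sum_degree_le_of_neighborFinset_subset hAB)
      (sum_degree_le_of_neighborFinset_subset hBA)
  rw [sum_deg_eq_of_deg_mem hdeg, sum_deg_eq_of_deg_mem hdeg] at hsum
  have hA := card_filter_add_card_filter_not (s := A) (p := (deg G · = s))
  have hB := card_filter_add_card_filter_not (s := B) (p := (deg G · = s))
  rw [hcard] at hA
  generalize #{v ∈ A | deg G v = s} = a at hA hsum ⊢
  generalize #{v ∈ B | deg G v = s} = b at hB hsum ⊢
  generalize #{v ∈ A | deg G v ≠ s} = a' at hA hsum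
  generalize #{v ∈ B | deg G v ≠ s} = b' at hB hsum
  zify at hA hB hsum
  have : ((a : ℤ) - b) * (s - r) = 0 := by
    linear_combination hsum - r * hA + r * hB
  rcases mul_eq_zero.mp this with hab | hsr <;> omega

theorem IsBabi.of_iso {W : Type*} {G' : SimpleGraph W} (f : G ≃g G') (h : IsBabi r s g G) :
    IsBabi r s g G' := by
  obtain ⟨hgirth, hdeg, ⟨v, hv⟩, ⟨w, hw⟩, hbal⟩ := h
  have hcard (d : ℕ) : {x | deg G x = d}.ncard = {x | deg G' x = d}.ncard := by
    simp only [← Nat.card_coe_set_eq]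
    exact Nat.card_congr (f.toEquiv.subtypeEquiv fun v => by simp [f.deg_apply])
  refine ⟨f.girth_eq ▸ hgirth, fun x => ?_, ⟨f v, by rwa [f.deg_apply]⟩,
    ⟨f w, by rwa [f.deg_apply]⟩, by rwa [← hcard, ← hcard]⟩
  rw [← f.apply_symm_apply x, f.deg_apply]
  exact hdeg _

variable [Fintype V]

theorem IsBabi.exists_fin (h : IsBabi r s g G) {n : ℕ} (hn : Fintype.card V = n) :
    ∃ G' : SimpleGraph (Fin n), IsBabi r s g G' := by
  subst hn
  exact ⟨G.map (Fintype.equivFin V), h.of_iso (Iso.map _ G)⟩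

theorem IsBabi.card_filter_deg_eq (h : IsBabi r s g G) :
    #(univ.filter (deg G · = r)) = #(univ.filter (deg G · = s)) := by
  simpa [Set.ncard_eq_toFinset_card'] using h.2.2.2.2

theorem IsBabi.card_eq (hrs : r ≠ s) (h : IsBabi r s g G) :
    Fintype.card V = 2 * #(univ.filter (deg G · = s)) := by
  have hcompl : univ.filter (deg G · ≠ s) = univ.filter (deg G · = r) :=
    filter_congr fun v _ => by rcases h.2.1 v with hv | hv <;> simp [hv, hrs, hrs.symm]
  rw [← card_univ, ← card_filter_add_card_filter_not (s := univ) (p := (deg G · = s)), hcompl,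
    h.card_filter_deg_eq]
  omega

variable [DecidableRel G.Adj]

theorem IsBabi.exists_adj_deg_eq (hrs : r < s) (h : IsBabi r s g G) :
    ∃ u v, G.Adj u v ∧ deg G u = s ∧ deg G v = s := by
  by_contra! hno
  obtain ⟨v₀, hv₀⟩ := h.2.2.2.1
  set S := univ.filter (deg G · = s)
  set R := univ.filter (deg G · = r)
  have hSR : ∀ v ∈ S, G.neighborFinset v ⊆ R := fun v hv w hw => by
    rw [mem_neighborFinset] at hw
    rw [mem_filter] at hv ⊢
    exact ⟨mem_univ w, (h.2.1 w).resolve_right (hno v w hw hv.2)⟩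
  have hsum := sum_degree_le_of_neighborFinset_subset hSR
  simp only [← deg_eq_degree] at hsum
  rw [sum_const_nat fun v hv => (mem_filter.mp hv).2,
    sum_const_nat fun v hv => (mem_filter.mp hv).2, h.card_filter_deg_eq] at hsum
  have hS : 0 < #S := card_pos.mpr ⟨v₀, mem_filter.mpr ⟨mem_univ _, hv₀⟩⟩
  have := Nat.le_of_mul_le_mul_left hsum hS
  omega

variable [DecidableEq V]

theorem IsBabi.two_mul_le_card (hrs : r < s) (hg : 3 < g) (h : IsBabi r s g G) :
    2 * s ≤ Fintype.card V := by
  obtain ⟨u, v, huv, hu, hv⟩ := h.exists_adj_deg_eq hrs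
  have hdisj := disjoint_neighborFinset_of_three_lt_girth (h.1 ▸ hg) huv
  rw [deg_eq_degree, ← card_neighborFinset_eq_degree] at hu hv
  calc 2 * s = #(G.neighborFinset u ∪ G.neighborFinset v) := by
        rw [card_union_of_disjoint hdisj]; omega
    _ ≤ Fintype.card V := card_le_univ _

theorem IsBabi.card_ne_two_mul (hrs : r < s) (hs : Odd s) (hg : 3 < g) (h : IsBabi r s g G) :
    Fintype.card V ≠ 2 * s := by
  intro hcard
  obtain ⟨u, v, huv, hu, hv⟩ := h.exists_adj_deg_eq hrs
  have hG : 3 < G.girth := h.1 ▸ hg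
  have hdisj := disjoint_neighborFinset_of_three_lt_girth hG huv
  rw [deg_eq_degree, ← card_neighborFinset_eq_degree] at hu hv
  have hcover : G.neighborFinset u ∪ G.neighborFinset v = Finset.univ :=
    eq_univ_of_card _ (by rw [card_union_of_disjoint hdisj]; omega)
  have hsplit := card_filter_deg_eq_of_neighborFinset_subset hrs h.2.1
    (fun x => neighborFinset_subset_of_union_eq_univ hG hcover)
    (fun y => neighborFinset_subset_of_union_eq_univ hG ((Finset.union_comm _ _).trans hcover))
    (hu.trans hv.symm)
  have hS : #(univ.filter (deg G · = s)) = #{x ∈ G.neighborFinset u | deg G x = s}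
      + #{x ∈ G.neighborFinset v | deg G x = s} := by
    rw [← hcover, filter_union, card_union_of_disjoint (disjoint_filter_filter hdisj)]
  have := h.card_eq hrs.ne
  obtain ⟨k, hk⟩ := hs
  omega

theorem IsBabi.two_mul_succ_le_card (hrs : r < s) (hs : Odd s) (hg : 3 < g)
    (h : IsBabi r s g G) : 2 * (s + 1) ≤ Fintype.card V := by
  have hle := h.two_mul_le_card hrs hg
  have hne := h.card_ne_two_mul hrs hs hg
  have heven := h.card_eq hrs.ne
  omega

end IsBabi

section Construction

theorem Fin.card_filter_sub_right_val_lt {m : ℕ} [NeZero m] (k : ℕ) (i : Fin m) :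
    #{j : Fin m | (j - i).val < k} = min m k := by
  rw [← Fin.card_filter_val_lt]
  exact card_equiv (Equiv.subRight i) (by simp)

theorem Fin.card_filter_sub_left_val_lt {m : ℕ} [NeZero m] (k : ℕ) (j : Fin m) :
    #{i : Fin m | (j - i).val < k} = min m k := by
  rw [← Fin.card_filter_val_lt]
  exact card_equiv (Equiv.subLeft j) (by simp)

/-- Each side of `babiGraph m k` is `Fin m ⊕ Fin m`, the `inl` part holding the vertices of
degree `2m - 1` and the `inr` part those of degree `m + k`. Across the two sides, `inl` vertices
are joined unless they carry the same index, an `inl` and an `inr` vertex are always joined,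
and `inr` vertices `i, j` are joined iff `j - i mod m < k`. -/
def babiLink (m k : ℕ) : Fin m ⊕ Fin m → Fin m ⊕ Fin m → Prop
  | .inl i, .inl j => i ≠ j
  | .inr i, .inr j => (j - i).val < k
  | _, _ => True

instance (m k : ℕ) : DecidableRel (babiLink m k) := fun a b => by
  cases a <;> cases b <;> unfold babiLink <;> infer_instance

def babiGraph (m k : ℕ) : SimpleGraph ((Fin m ⊕ Fin m) ⊕ (Fin m ⊕ Fin m)) where
  Adj
    | .inl a, .inr b => babiLink m k a b
    | .inr b, .inl a => babiLink m k a b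
    | _, _ => False
  symm := ⟨by rintro (a | b) (a | b) h <;> exact h⟩
  loopless := ⟨by rintro (a | b) h <;> exact h⟩

instance (m k : ℕ) : DecidableRel (babiGraph m k).Adj := fun x y => by
  cases x <;> cases y <;> unfold babiGraph <;> infer_instance

variable {m : ℕ} (k : ℕ)

theorem babiGraph_degree [NeZero m] (v : (Fin m ⊕ Fin m) ⊕ (Fin m ⊕ Fin m)) :
    (babiGraph m k).degree v = if (v.elim id id).isLeft then 2 * m - 1 else m + min m k := by
  rw [← card_neighborFinset_eq_degree, neighborFinset_eq_filter, card_filter]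
  rcases v with (i | i) | (i | i) <;>
    simp [babiGraph, babiLink, Fintype.sum_sum_type, sum_ite, ← ne_eq, filter_ne, filter_ne',
      card_erase_of_mem, Fin.card_filter_sub_right_val_lt, Fin.card_filter_sub_left_val_lt] <;>
    omega

theorem babiGraph_isBipartite : (babiGraph m k).IsBipartite :=
  (CompleteBipartiteGraph.bicoloring _ _).colorable.mono_left fun x y h => by
    rcases x with a | a <;> rcases y with b | b <;> simp_all [babiGraph]

theorem babiGraph_girth (hm : 2 ≤ m) : (babiGraph m k).girth = 4 := by
  let i₀ : Fin m := ⟨0, by omega⟩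
  let i₁ : Fin m := ⟨1, by omega⟩
  have hi : i₀ ≠ i₁ := by simp [i₀, i₁, Fin.ext_iff]
  have hadj (i j : Fin m) : (babiGraph m k).Adj (.inl (.inl i)) (.inr (.inr j)) := trivial
  let w := Walk.cons (hadj i₀ i₀) <| .cons (hadj i₁ i₀).symm <|
    .cons (hadj i₁ i₁) <| .cons (hadj i₀ i₁).symm .nil
  exact (babiGraph_isBipartite k).girth_eq_four (w := w)
    (by simp [w, Walk.cons_isCycle_iff, hi, hi.symm]) rfl

theorem babiGraph_isBabi (hm : 2 ≤ m) (hk : k + 1 < m) :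
    IsBabi (m + k) (2 * m - 1) 4 (babiGraph m k) := by
  have : NeZero m := ⟨by omega⟩
  have hdeg (v) : deg (babiGraph m k) v = if (v.elim id id).isLeft then 2 * m - 1 else m + k := by
    rw [deg_eq_degree, babiGraph_degree, min_eq_right (by omega)]
  have hne : m + k ≠ 2 * m - 1 := by omega
  refine ⟨babiGraph_girth k hm, fun v => ?_, ⟨.inl (.inr ⟨0, by omega⟩), by simp [hdeg]⟩,
    ⟨.inl (.inl ⟨0, by omega⟩), by simp [hdeg]⟩, ?_⟩
  · rw [hdeg]
    split_ifs <;> simp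
  · simp only [hdeg, Set.ncard_eq_toFinset_card', Set.toFinset_ofPred, card_filter,
      Fintype.sum_sum_type]
    simp [hne.symm, if_neg hne]

theorem exists_isBabi_of_odd {r s : ℕ} (hrs : r < s) (h2r : s < 2 * r) (hs : Odd s) :
    ∃ G : SimpleGraph (Fin (2 * (s + 1))), IsBabi r s 4 G := by
  obtain ⟨m, rfl⟩ := hs
  have hgraph := babiGraph_isBabi (r - (m + 1)) (m := m + 1) (by omega) (by omega)
  rw [show m + 1 + (r - (m + 1)) = r by omega, show 2 * (m + 1) - 1 = 2 * m + 1 by omega]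
    at hgraph
  exact hgraph.exists_fin (by simp; omega)

end Construction

theorem stmt_14_general (r s : ℕ) (hrs : r < s) (h2r : s < 2 * r) (hso : Odd s) :
    (∀ G : SimpleGraph (Fin (2 * s)), ¬ IsBabi r s 4 G) ∧
    (∃ G : SimpleGraph (Fin (2 * (s + 1))), IsBabi r s 4 G) ∧
    (∀ (n : ℕ) (G : SimpleGraph (Fin n)), IsBabi r s 4 G → 2 * (s + 1) ≤ n) := by
  classical
  refine ⟨fun G hG => ?_, exists_isBabi_of_odd hrs h2r hso, fun n G hG => ?_⟩
  · simpa using hG.card_ne_two_mul hrs hso (by norm_num)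
  · simpa using hG.two_mul_succ_le_card hrs hso (by norm_num)

/-- when `2r > s` and `s` is odd, there is no `(r,s;4)`-babi-graph
of order `2s`, and `n_bb(r,s;4) = 2(s+1)`. -/
theorem stmt_14 (r s : ℕ) (hr : 2 ≤ r) (hrs : r < s) (h2r : s < 2 * r) (hso : Odd s) :
    (∀ G : SimpleGraph (Fin (2 * s)), ¬ IsBabi r s 4 G) ∧
    (∃ G : SimpleGraph (Fin (2 * (s + 1))), IsBabi r s 4 G) ∧
    (∀ (n : ℕ) (G : SimpleGraph (Fin n)), IsBabi r s 4 G → 2 * (s + 1) ≤ n) :=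
  stmt_14_general r s hrs h2r hso
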